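/- Every non-bipartite colorful graph G has power thickness θ(G) = 1. -/

import Mathlib

structure SGraph where
  V : Type
  Adj : V → V → Prop
  symm : ∀ u v, Adj u v → Adj v u

namespace SGraph

/-- There is a walk of length exactly `n` from `u` to `v`. -/
def walkLen (G : SGraph) : ℕ → G.V → G.V → Prop
  | 0, u, v => u = v
  | n+1, u, v => ∃ w, G.Adj u w ∧ G.walkLen n w v

theorem walkLen_concat (G : SGraph) : ∀ (n : ℕ) (u v w : G.V),
    G.walkLen n u v → G.Adj v w → G.walkLen (n+1) u w := by
  intro n
  induction n with
  | zero =>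
      intro u v w h hadj
      cases h
      exact ⟨w, hadj, rfl⟩
  | succ n ih =>
      rintro u v w ⟨x, hux, hxv⟩ hadj
      exact ⟨x, hux, ih x v w hxv hadj⟩

theorem walkLen_symm (G : SGraph) : ∀ (n : ℕ) (u v : G.V),
    G.walkLen n u v → G.walkLen n v u := by
  intro n
  induction n with
  | zero => intro u v h; exact h.symm
  | succ n ih =>
      rintro u v ⟨w, huw, hwv⟩
      exact G.walkLen_concat n v w u (ih w v hwv) (G.symm u w huw)

/-- The `k`-th power of a graph: same vertices, adjacency = existence of a
walk of length exactly `k` (loops allowed). -/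
def pow (G : SGraph) (k : ℕ) : SGraph where
  V := G.V
  Adj u v := G.walkLen k u v
  symm := G.walkLen_symm k

/-- Existence of a graph homomorphism. -/
def homTo (G H : SGraph) : Prop :=
  ∃ f : G.V → H.V, ∀ u v, G.Adj u v → H.Adj (f u) (f v)

/-- The `(2s+1)`-subdivision `S_{2s+1}(G)`: every edge is replaced by a path
of length `2s+1`.  Following the paper's notation, the ordered pair `(u,v)`
(with `u ~ v`) carries the `s` inner vertices `(uv)_1, …, (uv)_s`. -/
def subdiv (G : SGraph) (s : ℕ) : SGraph where
  V := G.V ⊕ ({p : G.V × G.V // G.Adj p.1 p.2} × Fin s)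
  Adj x y :=
    match x, y with
    | Sum.inl u, Sum.inl v => s = 0 ∧ G.Adj u v
    | Sum.inl u, Sum.inr (e, k) => u = e.1.2 ∧ (k : ℕ) = s - 1
    | Sum.inr (e, k), Sum.inl u => u = e.1.2 ∧ (k : ℕ) = s - 1
    | Sum.inr (e, k), Sum.inr (e', l) =>
        e'.1.1 = e.1.2 ∧ e'.1.2 = e.1.1 ∧
        ((k : ℕ) + (l : ℕ) + 2 = s ∨ (k : ℕ) + (l : ℕ) + 2 = s + 1)
  symm := by
    rintro (u | ⟨e, k⟩) (v | ⟨e', l⟩) h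
    · exact ⟨h.1, G.symm _ _ h.2⟩
    · exact h
    · exact h
    · obtain ⟨h1, h2, h3⟩ := h
      exact ⟨h2.symm, h1.symm, by omega⟩

/-- `q < og(G)`: the rational `q` is smaller than the odd girth of `G`
(the length of a shortest odd closed walk; vacuously true if `G` is bipartite). -/
def ltOddGirth (G : SGraph) (q : ℚ) : Prop :=
  ∀ n : ℕ, Odd n → (∃ v, G.walkLen n v v) → q < (n : ℚ)

/-- A graph is non-bipartite iff it contains an odd closed walk. -/
def Nonbipartite (G : SGraph) : Prop :=
  ∃ (n : ℕ) (v : G.V), Odd n ∧ G.walkLen n v v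

/-- The odd girth, as an extended natural number (`⊤` for bipartite graphs). -/
noncomputable def oddGirth (G : SGraph) : ℕ∞ :=
  sInf {N : ℕ∞ | ∃ n : ℕ, N = (n : ℕ∞) ∧ Odd n ∧ ∃ v, G.walkLen n v v}

/-- The complete graph on `m` vertices. -/
def completeGraph (m : ℕ) : SGraph :=
  ⟨Fin m, fun u v => u ≠ v, fun _ _ h => h.symm⟩

/-- The chromatic number: least `m` such that `G` maps homomorphically to `K_m`. -/
noncomputable def chromatic (G : SGraph) : ℕ :=
  sInf {m : ℕ | G.homTo (completeGraph m)}

/-- The `i`-th power thickness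
`θ_i(G) = sup { (2r+1)/(2s+1) | χ(G^{(2r+1)/(2s+1)}) ≤ χ(G)+i, (2r+1)/(2s+1) < og(G) }`. -/
noncomputable def powerThickness (G : SGraph) (i : ℤ) : ℝ :=
  sSup {x : ℝ | ∃ r s : ℕ, x = (2*(r:ℝ)+1)/(2*(s:ℝ)+1) ∧
    ((((G.subdiv s).pow (2*r+1)).chromatic : ℤ) ≤ (G.chromatic : ℤ) + i) ∧
    G.ltOddGirth ((2*(r:ℚ)+1)/(2*(s:ℚ)+1))}

/-- The graph `H^{-1/(2r+1)}`. -/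
def negPow (H : SGraph) (r : ℕ) : SGraph where
  V := {A : Fin (r+1) → Set H.V //
        (∃ v, A 0 = {v}) ∧
        ∀ i : Fin (r+1), (A i).Nonempty ∧ A i ⊆ {u | ∃ v ∈ A 0, H.walkLen i v u}}
  Adj A B :=
    (∀ i j : Fin (r+1), (j : ℕ) = (i : ℕ) + 1 → A.1 i ⊆ B.1 j ∧ B.1 i ⊆ A.1 j) ∧
    ∀ j : Fin (r+1), ∀ a ∈ A.1 j, ∀ b ∈ B.1 j, H.Adj a b
  symm := by
    rintro A B ⟨h1, h2⟩
    exact ⟨fun i j hij => ⟨(h1 i j hij).2, (h1 i j hij).1⟩,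
           fun j b hb a ha => H.symm _ _ (h2 j a ha b hb)⟩

/-- The circular complete graph `K_{n/d}`. -/
def circGraph (n d : ℕ) : SGraph where
  V := Fin n
  Adj u v := (d : ℤ) ≤ |(u : ℤ) - (v : ℤ)| ∧ |(u : ℤ) - (v : ℤ)| ≤ (n : ℤ) - d
  symm := by
    intro u v h
    rwa [abs_sub_comm]

/-- The circular chromatic number, as a real number. -/
noncomputable def circChrom (G : SGraph) : ℝ :=
  sInf {x : ℝ | ∃ n d : ℕ, 0 < d ∧ 2 * d ≤ n ∧ Nat.gcd n d = 1 ∧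
    x = (n : ℝ) / (d : ℝ) ∧ G.homTo (circGraph n d)}

/-- The cycle on `m` vertices. -/
def cycleGraph (m : ℕ) : SGraph :=
  ⟨ZMod m, fun i j => i = j + 1 ∨ j = i + 1, fun _ _ h => h.symm⟩

/-- Graph isomorphism. -/
def Isom (G H : SGraph) : Prop :=
  ∃ f : G.V ≃ H.V, ∀ u v, G.Adj u v ↔ H.Adj (f u) (f v)

/-- The helical graph `H(m,n,k)`. -/
def helical (m n k : ℕ) : SGraph where
  V := {A : Fin k → Set (Fin m) //
        (∀ h : 0 < k, (A ⟨0, h⟩).ncard = n) ∧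
        (∀ i, n ≤ (A i).ncard) ∧
        (∀ i : Fin k, ∀ h : (i : ℕ) + 1 < k, A i ∩ A ⟨(i : ℕ) + 1, h⟩ = ∅) ∧
        (∀ i : Fin k, ∀ h : (i : ℕ) + 2 < k, A i ⊆ A ⟨(i : ℕ) + 2, h⟩)}
  Adj A B :=
    (∀ i, A.1 i ∩ B.1 i = ∅) ∧
    (∀ i : Fin k, ∀ h : (i : ℕ) + 1 < k,
      A.1 i ⊆ B.1 ⟨(i : ℕ) + 1, h⟩ ∧ B.1 i ⊆ A.1 ⟨(i : ℕ) + 1, h⟩)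
  symm := by
    rintro A B ⟨h1, h2⟩
    refine ⟨fun i => ?_, fun i h => ⟨(h2 i h).2, (h2 i h).1⟩⟩
    rw [Set.inter_comm]
    exact h1 i

/-- A graph with chromatic number `k` is colorful if every proper `k`-coloring
admits a (nonempty) induced subgraph all of whose vertices see all `k` colors in
their closed neighborhood. -/
def Colorful (G : SGraph) : Prop :=
  ∀ c : G.V → Fin G.chromatic, (∀ u v, G.Adj u v → c u ≠ c v) →
    ∃ S : Set G.V, S.Nonempty ∧
      ∀ v ∈ S, ∀ col : Fin G.chromatic,
        ∃ u ∈ S, (u = v ∨ G.Adj v u) ∧ c u = col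

end SGraph

open SGraph
/-- The power thickness `θ(G)` (with the condition `χ(G^{(2r+1)/(2s+1)}) = χ(G)`). -/
noncomputable def SGraph.powerThicknessEq (G : SGraph) : ℝ :=
  sSup {x : ℝ | ∃ r s : ℕ, x = (2*(r:ℝ)+1)/(2*(s:ℝ)+1) ∧
    (((G.subdiv s).pow (2*r+1)).chromatic = G.chromatic) ∧
    G.ltOddGirth ((2*(r:ℚ)+1)/(2*(s:ℚ)+1))}

/-!
If `G` has a loop, then so does `S_{2s+1}(G)` for `s ≥ 1`, all chromatic numbers involved are `0`,
the odd girth is `1`, and the admissible ratios `(2t+1)/(2t+3)` tend to `1` from below.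

Otherwise `r = s = 0` gives the ratio `1`, and no ratio above `1` is admissible. Suppose `c` is a
proper `χ(G)`-colouring of `(S_{2s+1}G)^{2r+1}` with `r > s`. Vertices joined by a walk of length
`2s+3` get different colours, so `c` restricts to a proper colouring of `G`; let `S` be a colourful
set for it. Along each subdivided edge `vx` with `v ∈ S`, every even position carries the colour
of `v`: otherwise that colour is the colour of a neighbour `u ∈ S` of `v`, and the even position
two steps closer to `u` on the path `uv`, which by induction has colour `c u`, lies at distance
`2s+3`. Since `χ(G) ≥ 3`, there are `v, x, w, z ∈ S` forming a walk with `c x ≠ c v`,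
`c w ∉ {c v, c x}` and `c z = c v`; the neighbours of `x` on `vx` and of `w` on `zw` then both
carry the colour `c v` and are joined by a walk of length `2s+3`.
-/

section Ratios

variable {K : Type*} [Field K] [LinearOrder K] [IsStrictOrderedRing K] {r s : ℕ}

theorem odd_div_odd_le_one_iff : (2 * (r : K) + 1) / (2 * s + 1) ≤ 1 ↔ r ≤ s := by
  rw [div_le_one (by positivity)]
  norm_cast
  omega

theorem odd_div_odd_lt_one_iff : (2 * (r : K) + 1) / (2 * s + 1) < 1 ↔ r < s := by
  rw [div_lt_one (by positivity)]
  norm_cast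
  omega

theorem exists_lt_odd_div_odd_succ {w : ℝ} (hw : w < 1) :
    ∃ t : ℕ, w < (2 * (t : ℝ) + 1) / (2 * ((t + 1 : ℕ) : ℝ) + 1) := by
  obtain ⟨t, ht⟩ := exists_nat_gt (2 / (1 - w))
  have ht' : 2 < (1 - w) * t := by rwa [div_lt_iff₀' (by linarith)] at ht
  refine ⟨t, ?_⟩
  rw [lt_div_iff₀ (by positivity)]
  push_cast
  nlinarith

end Ratios

namespace SGraph

variable {G H : SGraph}

section Walks

theorem walkLen_append {m n : ℕ} {a b c : G.V} (h₁ : G.walkLen m a b) (h₂ : G.walkLen n b c) :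
    G.walkLen (m + n) a c := by
  induction m generalizing a with
  | zero => cases h₁; simpa using h₂
  | succ m ih =>
    obtain ⟨w, haw, hwb⟩ := h₁
    rw [Nat.add_right_comm]
    exact ⟨w, haw, ih hwb⟩

theorem walkLen_succ_add_two_mul {n : ℕ} {a b : G.V} (h : G.walkLen (n + 1) a b) :
    ∀ k, G.walkLen (n + 1 + 2 * k) a b
  | 0 => h
  | k + 1 => by
    have ⟨w, haw, _⟩ := h
    exact ⟨w, haw, a, G.symm _ _ haw, walkLen_succ_add_two_mul h k⟩

theorem walkLen_of_adj_self {a : G.V} (h : G.Adj a a) : ∀ n, G.walkLen n a a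
  | 0 => rfl
  | n + 1 => ⟨a, h, walkLen_of_adj_self h n⟩

theorem walkLen_comp {f : G.V → H.V} (hf : ∀ u v, G.Adj u v → H.Adj (f u) (f v)) :
    ∀ {n : ℕ} {u v : G.V}, G.walkLen n u v → H.walkLen n (f u) (f v)
  | 0, _, _, rfl => rfl
  | _ + 1, _, _, ⟨w, huw, hwv⟩ => ⟨f w, hf _ _ huw, walkLen_comp hf hwv⟩

end Walks

section Coloring

def IsProperColoring {α : Type*} (G : SGraph) (c : G.V → α) : Prop :=
  ∀ u v, G.Adj u v → c u ≠ c v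

def IsColorfulSet {α : Type*} (G : SGraph) (c : G.V → α) (S : Set G.V) : Prop :=
  ∀ v ∈ S, ∀ a, ∃ u ∈ S, (u = v ∨ G.Adj v u) ∧ c u = a

theorem IsProperColoring.of_pow_succ_add_two_mul {α : Type*} {c : G.V → α} {n k : ℕ}
    (hc : (G.pow (n + 1 + 2 * k)).IsProperColoring c) : (G.pow (n + 1)).IsProperColoring c :=
  fun _ _ h => hc _ _ (walkLen_succ_add_two_mul h k)

theorem homTo_trans {K : SGraph} (h₁ : G.homTo H) (h₂ : H.homTo K) : G.homTo K := by
  obtain ⟨f, hf⟩ := h₁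
  obtain ⟨g, hg⟩ := h₂
  exact ⟨g ∘ f, fun u v huv => hg _ _ (hf u v huv)⟩

theorem chromatic_eq_of_homTo (h₁ : G.homTo H) (h₂ : H.homTo G) :
    G.chromatic = H.chromatic :=
  congrArg sInf <| Set.ext fun _ => ⟨homTo_trans h₂, homTo_trans h₁⟩

theorem homTo_completeGraph_chromatic_of_ne_zero (h : G.chromatic ≠ 0) :
    G.homTo (completeGraph G.chromatic) :=
  Nat.sInf_mem (s := {m | G.homTo (completeGraph m)}) <| by
    by_contra hne
    rw [Set.not_nonempty_iff_eq_empty] at hne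
    exact h (by rw [chromatic, hne, Nat.sInf_empty])

theorem homTo_completeGraph_chromatic (hf : Finite G.V) (hG : ∀ v, ¬ G.Adj v v) :
    G.homTo (completeGraph G.chromatic) := by
  obtain ⟨n, ⟨e⟩⟩ := Finite.exists_equiv_fin G.V
  refine Nat.sInf_mem (s := {m | G.homTo (completeGraph m)}) ⟨n, e, fun u v huv heq => ?_⟩
  obtain rfl := e.injective heq
  exact hG u huv

theorem chromatic_eq_zero_of_adj_self {v : G.V} (h : G.Adj v v) : G.chromatic = 0 := by
  have he : {m : ℕ | G.homTo (completeGraph m)} = ∅ :=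
    Set.eq_empty_of_forall_notMem fun _ ⟨c, hc⟩ => hc v v h rfl
  rw [chromatic, he, Nat.sInf_empty]

theorem walkLen_completeGraph_iff_even {m : ℕ} (hm : m ≤ 2) :
    ∀ {n : ℕ} {u v : Fin m}, (completeGraph m).walkLen n u v → (u = v ↔ Even n)
  | 0, _, _, rfl => by simp
  | n + 1, u, v, ⟨w, (huw : u ≠ w), hwv⟩ => by
    have ih := walkLen_completeGraph_iff_even hm hwv
    have := u.isLt; have := v.isLt; have := w.isLt
    simp only [Fin.ext_iff, Nat.even_iff] at ih huw ⊢
    omega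

theorem three_le_of_homTo_completeGraph (hG : G.Nonbipartite) {k : ℕ}
    (h : G.homTo (completeGraph k)) : 3 ≤ k := by
  obtain ⟨f, hf⟩ := h
  obtain ⟨n, v, hn, hv⟩ := hG
  by_contra! hk
  have := (walkLen_completeGraph_iff_even (by omega) (walkLen_comp hf hv)).1 rfl
  exact Nat.not_even_iff_odd.2 hn this

end Coloring

section Subdivision

variable {s : ℕ}

variable (s) in
/-- The vertex at distance `p ≤ 2s+1` from `v` on the path of `S_{2s+1}(G)` replacing the edge
`vu`. Odd positions are inner vertices of the pair `(u,v)`, even ones of the pair `(v,u)`. -/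
def edgePoint {v u : G.V} (h : G.Adj v u) (p : ℕ) :
    G.V ⊕ ({e : G.V × G.V // G.Adj e.1 e.2} × Fin s) :=
  if _ : p = 0 then Sum.inl v
  else if _ : 2 * s + 1 ≤ p then Sum.inl u
  else if _ : p % 2 = 1 then Sum.inr (⟨(u, v), G.symm _ _ h⟩, ⟨s - (p + 1) / 2, by omega⟩)
  else Sum.inr (⟨(v, u), h⟩, ⟨p / 2 - 1, by omega⟩)

section

variable {v u : G.V} (h : G.Adj v u)

theorem edgePoint_zero : edgePoint s h 0 = Sum.inl v := rfl

theorem edgePoint_two_mul_add_one : edgePoint s h (2 * s + 1) = Sum.inl u := by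
  rw [edgePoint, dif_neg (by omega), dif_pos le_rfl]

theorem adj_edgePoint_succ {p : ℕ} (hp : p < 2 * s + 1) :
    (G.subdiv s).Adj (edgePoint s h p) (edgePoint s h (p + 1)) := by
  unfold edgePoint
  split_ifs <;> dsimp only [subdiv] <;> and_intros <;>
    first | contradiction | rfl | exact h | omega

theorem walkLen_edgePoint {a b : ℕ} (hab : a ≤ b) (hb : b ≤ 2 * s + 1) :
    (G.subdiv s).walkLen (b - a) (edgePoint s h a) (edgePoint s h b) := by
  induction b, hab using Nat.le_induction with
  | base => rw [Nat.sub_self]; rfl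
  | succ b hab ih =>
    rw [Nat.sub_add_comm hab]
    exact walkLen_concat _ _ _ _ _ (ih (by omega)) (adj_edgePoint_succ h (by omega))

theorem walkLen_inl_edgePoint {p : ℕ} (hp : p ≤ 2 * s + 1) :
    (G.subdiv s).walkLen p (Sum.inl v) (edgePoint s h p) := by
  simpa [edgePoint_zero] using walkLen_edgePoint h (Nat.zero_le p) hp

theorem walkLen_edgePoint_inl {p : ℕ} (hp : p ≤ 2 * s + 1) :
    (G.subdiv s).walkLen (2 * s + 1 - p) (edgePoint s h p) (Sum.inl u) := by
  simpa [edgePoint_two_mul_add_one] using walkLen_edgePoint h hp le_rfl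

end

theorem walkLen_inl_inl {v u : G.V} (h : G.Adj v u) :
    (G.subdiv s).walkLen (2 * s + 1) (Sum.inl v) (Sum.inl u) := by
  simpa [edgePoint_two_mul_add_one] using walkLen_inl_edgePoint (s := s) h le_rfl

theorem walkLen_through_vertex {v x u : G.V} (hvx : G.Adj v x) (huv : G.Adj u v) {i : ℕ}
    (hi : i < s) :
    (G.subdiv s).walkLen (2 * s + 3) (edgePoint s hvx (2 * (i + 1))) (edgePoint s huv (2 * i)) := by
  have := walkLen_append
    (walkLen_symm _ _ _ _ (walkLen_inl_edgePoint hvx (s := s) (p := 2 * (i + 1)) (by omega)))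
    (walkLen_symm _ _ _ _ (walkLen_edgePoint_inl huv (s := s) (p := 2 * i) (by omega)))
  rwa [show 2 * (i + 1) + (2 * s + 1 - 2 * i) = 2 * s + 3 by omega] at this

theorem walkLen_through_edge {v x w z : G.V} (hvx : G.Adj v x) (hxw : G.Adj x w)
    (hzw : G.Adj z w) :
    (G.subdiv s).walkLen (2 * s + 3) (edgePoint s hvx (2 * s)) (edgePoint s hzw (2 * s)) := by
  have hx := walkLen_edgePoint_inl hvx (s := s) (p := 2 * s) (by omega)
  have hz := walkLen_symm _ _ _ _ (walkLen_edgePoint_inl hzw (s := s) (p := 2 * s) (by omega))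
  rw [show 2 * s + 1 - 2 * s = 1 by omega] at hx hz
  have := walkLen_append (walkLen_append hx (walkLen_inl_inl hxw)) hz
  rwa [show 1 + (2 * s + 1) + 1 = 2 * s + 3 by omega] at this

theorem IsProperColoring.comp_inl {α : Type*} {c : (G.subdiv s).V → α}
    (hc : ((G.subdiv s).pow (2 * s + 3)).IsProperColoring c) :
    G.IsProperColoring (c ∘ Sum.inl) :=
  fun _ _ h => hc _ _ (walkLen_succ_add_two_mul (walkLen_inl_inl h) 1)

variable {k : ℕ} {c : (G.subdiv s).V → Fin k} {S : Set G.V}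

theorem color_edgePoint_two_mul (hc : ((G.subdiv s).pow (2 * s + 3)).IsProperColoring c)
    (hS : G.IsColorfulSet (c ∘ Sum.inl) S) {i : ℕ} (hi : i ≤ s) {v x : G.V} (hv : v ∈ S)
    (hvx : G.Adj v x) : c (edgePoint s hvx (2 * i)) = c (Sum.inl v) := by
  induction i generalizing v x with
  | zero => rfl
  | succ i ih =>
    by_contra hne
    obtain ⟨u, hu, rfl | hvu, hcu⟩ := hS v hv (c (edgePoint s hvx (2 * (i + 1))))
    · exact hne hcu.symm
    have huv := G.symm _ _ hvu
    exact hc _ _ (walkLen_through_vertex hvx huv (by omega))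
      ((ih (by omega) hu huv).trans hcu).symm

theorem IsColorfulSet.eq_empty (hk : 3 ≤ k)
    (hc : ((G.subdiv s).pow (2 * s + 3)).IsProperColoring c)
    (hS : G.IsColorfulSet (c ∘ Sum.inl) S) : S = ∅ := by
  refine Set.eq_empty_of_forall_notMem fun v hv => ?_
  obtain ⟨a, hav, -⟩ := Fin.exists_ne_and_ne_of_two_lt (c (Sum.inl v)) (c (Sum.inl v)) hk
  obtain ⟨x, hx, rfl | hvx, hxa⟩ := hS v hv a
  · exact hav hxa.symm
  obtain ⟨b, hbx, hbv⟩ := Fin.exists_ne_and_ne_of_two_lt (c (Sum.inl x)) (c (Sum.inl v)) hk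
  obtain ⟨w, hw, rfl | hxw, hwb⟩ := hS x hx b
  · exact hbx hwb.symm
  obtain ⟨z, hz, rfl | hwz, hzv⟩ := hS w hw (c (Sum.inl v))
  · exact hbv (hwb.symm.trans hzv)
  have hzw := G.symm _ _ hwz
  refine hc _ _ (walkLen_through_edge hvx hxw hzw) ?_
  rw [color_edgePoint_two_mul hc hS le_rfl hv hvx, color_edgePoint_two_mul hc hS le_rfl hz hzw]
  exact hzv.symm

end Subdivision

theorem chromatic_subdiv_pow_ne_of_lt (hG : G.Nonbipartite) (hf : Finite G.V) (hc : G.Colorful)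
    (hloop : ∀ v, ¬ G.Adj v v) {r s : ℕ} (hsr : s < r) :
    ((G.subdiv s).pow (2 * r + 1)).chromatic ≠ G.chromatic := by
  intro hχ
  have hk := three_le_of_homTo_completeGraph hG (homTo_completeGraph_chromatic hf hloop)
  obtain ⟨c, hcP⟩ : ((G.subdiv s).pow (2 * r + 1)).homTo (completeGraph G.chromatic) :=
    hχ ▸ homTo_completeGraph_chromatic_of_ne_zero (by omega)
  obtain ⟨m, rfl⟩ := Nat.exists_eq_add_of_lt hsr
  rw [show 2 * (s + m + 1) + 1 = 2 * s + 2 + 1 + 2 * m by ring] at hcP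
  have hc₃ : ((G.subdiv s).pow (2 * s + 3)).IsProperColoring c :=
    IsProperColoring.of_pow_succ_add_two_mul hcP
  obtain ⟨S, hSne, hS⟩ := hc (c ∘ Sum.inl) hc₃.comp_inl
  exact hSne.ne_empty (IsColorfulSet.eq_empty hk hc₃ hS)

theorem chromatic_subdiv_zero_pow_one : ((G.subdiv 0).pow 1).chromatic = G.chromatic := by
  refine chromatic_eq_of_homTo ⟨Sum.elim id fun e => e.2.elim0, ?_⟩
    ⟨Sum.inl, fun _ v h => ⟨Sum.inl v, ⟨rfl, h⟩, rfl⟩⟩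
  rintro (u | ⟨-, i⟩) _ ⟨v | ⟨-, j⟩, h, rfl⟩
  exacts [h.2, j.elim0, i.elim0, i.elim0]

theorem chromatic_subdiv_pow_eq_zero_of_adj_self {v : G.V} (hv : G.Adj v v) {s : ℕ}
    (hs : s ≠ 0) (n : ℕ) : ((G.subdiv s).pow n).chromatic = 0 := by
  have hmid : (G.subdiv s).Adj (Sum.inr (⟨(v, v), hv⟩, ⟨(s - 1) / 2, by omega⟩))
      (Sum.inr (⟨(v, v), hv⟩, ⟨(s - 1) / 2, by omega⟩)) :=
    ⟨rfl, rfl, by dsimp only; omega⟩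
  exact chromatic_eq_zero_of_adj_self (walkLen_of_adj_self hmid n)

theorem ltOddGirth_of_lt_one {q : ℚ} (hq : q < 1) : G.ltOddGirth q :=
  fun _ hn _ => hq.trans_le (by exact_mod_cast hn.pos)

theorem ltOddGirth_one (hloop : ∀ v, ¬ G.Adj v v) : G.ltOddGirth 1 := by
  rintro _ ⟨_ | m, rfl⟩ ⟨v, hv⟩
  · obtain ⟨w, hvw, rfl⟩ := hv
    exact (hloop _ hvw).elim
  · push_cast
    linarith

theorem lt_one_of_ltOddGirth {v : G.V} (hv : G.Adj v v) {q : ℚ} (hq : G.ltOddGirth q) :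
    q < 1 := by
  simpa using hq 1 odd_one ⟨v, v, hv, rfl⟩

def thicknessRatios (G : SGraph) : Set ℝ :=
  {x : ℝ | ∃ r s : ℕ, x = (2 * (r : ℝ) + 1) / (2 * (s : ℝ) + 1) ∧
    ((G.subdiv s).pow (2 * r + 1)).chromatic = G.chromatic ∧
    G.ltOddGirth ((2 * (r : ℚ) + 1) / (2 * (s : ℚ) + 1))}

theorem powerThicknessEq_eq_sSup : G.powerThicknessEq = sSup G.thicknessRatios := rfl

theorem powerThicknessEq_eq_one_of_adj_self {v : G.V} (hv : G.Adj v v) :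
    G.powerThicknessEq = 1 := by
  have hmem (t : ℕ) :
      (2 * (t : ℝ) + 1) / (2 * ((t + 1 : ℕ) : ℝ) + 1) ∈ G.thicknessRatios :=
    ⟨t, t + 1, rfl,
      by rw [chromatic_subdiv_pow_eq_zero_of_adj_self hv t.succ_ne_zero,
        chromatic_eq_zero_of_adj_self hv],
      ltOddGirth_of_lt_one (odd_div_odd_lt_one_iff.2 t.lt_succ_self)⟩
  rw [powerThicknessEq_eq_sSup]
  refine csSup_eq_of_forall_le_of_forall_lt_exists_gt ⟨_, hmem 0⟩ ?_ fun w hw => ?_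
  · rintro _ ⟨r, s, rfl, -, hq⟩
    exact odd_div_odd_le_one_iff.2 (odd_div_odd_lt_one_iff.1 (lt_one_of_ltOddGirth hv hq)).le
  · obtain ⟨t, ht⟩ := exists_lt_odd_div_odd_succ hw
    exact ⟨_, hmem t, ht⟩

theorem powerThicknessEq_eq_one_of_loopless (hG : G.Nonbipartite) (hf : Finite G.V)
    (hc : G.Colorful) (hloop : ∀ v, ¬ G.Adj v v) : G.powerThicknessEq = 1 := by
  rw [powerThicknessEq_eq_sSup]
  refine IsGreatest.csSup_eq
    ⟨⟨0, 0, by norm_num, chromatic_subdiv_zero_pow_one, by simpa using ltOddGirth_one hloop⟩,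
      ?_⟩
  rintro _ ⟨r, s, rfl, hχ, -⟩
  exact odd_div_odd_le_one_iff.2
    (not_lt.1 fun hsr => chromatic_subdiv_pow_ne_of_lt hG hf hc hloop hsr hχ)

end SGraph

/-- Every non-bipartite colorful graph has power thickness 1. -/
theorem colorful_powerThickness (G : SGraph) (hG : G.Nonbipartite) (hf : Finite G.V)
    (hc : G.Colorful) : G.powerThicknessEq = 1 := by
  by_cases hloop : ∃ v, G.Adj v v
  · obtain ⟨v, hv⟩ := hloop
    exact powerThicknessEq_eq_one_of_adj_self hv
  · exact powerThicknessEq_eq_one_of_loopless hG hf hc (not_exists.1 hloop)
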